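/- Define L₀(t,x) = λ² G_κ(t,x)² with G_κ(t,x) = (1/2)·1_{|x| ≤ κt}, and inductively L_{n+1} = L₀ ⋆ L_n where ⋆ is space-time convolution: (f ⋆ g)(t,x) = ∫₀ᵗ∫_ℝ f(t−s, x−y) g(s,y) dy ds. Then for all n ∈ ℕ and (t,x) with −κt ≤ x ≤ κt, L_n(t,x) = λ^{2n+2} ((κt)² − x²)ⁿ / (2^{3n+2} (n!)² κⁿ), and L_n(t,x) = 0 for |x| > κt. -/
import Mathlib

open Real MeasureTheory
open scoped Convolution

/-- Wave kernel `G_κ(t,x) = (1/2)·1_{|x| ≤ κt}` for `t ≥ 0`, and `0` for `t < 0`. -/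
noncomputable def waveKernel (κ t x : ℝ) : ℝ :=
  if 0 ≤ t ∧ |x| ≤ κ * t then 1 / 2 else 0

/-- `T_κ(t,x) = (t − |x|/(2κ))·1_{|x| ≤ 2κt}`. -/
noncomputable def Tker (κ t x : ℝ) : ℝ :=
  if |x| ≤ 2 * κ * t then t - |x| / (2 * κ) else 0

/-- Iterated space-time convolutions of `L₀(t,x) = λ² G_κ(t,x)²` with itself:
`L_{n+1} = L₀ ⋆ L_n` where `(f ⋆ g)(t,x) = ∫₀ᵗ∫_ℝ f(t−s, x−y) g(s,y) dy ds`. -/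
noncomputable def Lker (κ lam : ℝ) : ℕ → ℝ → ℝ → ℝ
  | 0 => fun t x => lam ^ 2 * (waveKernel κ t x) ^ 2
  | n + 1 => fun t x =>
      ∫ s in (0:ℝ)..t, ∫ y : ℝ, Lker κ lam 0 (t - s) (x - y) * Lker κ lam n s y

noncomputable def bump (U : ℝ) (n : ℕ) : ℝ → ℝ :=
  (Set.Icc (0:ℝ) U).indicator (fun u => u ^ n)

lemma bump_integrable (U : ℝ) (n : ℕ) : Integrable (bump U n) := by
  rw [bump, integrable_indicator_iff measurableSet_Icc]
  exact (continuous_pow n).integrableOn_Icc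

lemma bump_integral (U : ℝ) (n : ℕ) (hU : 0 ≤ U) :
    ∫ u, bump U n u = U ^ (n+1) / (n+1) := by
  rw [bump, integral_indicator measurableSet_Icc, integral_Icc_eq_integral_Ioc,
    ← intervalIntegral.integral_of_le hU, integral_pow]
  simp

lemma bump_eq_zero {U : ℝ} {n : ℕ} {u : ℝ} (h : u ∉ Set.Icc (0:ℝ) U) : bump U n u = 0 :=
  Set.indicator_of_notMem h _

lemma bump_eq_pow {U : ℝ} {n : ℕ} {u : ℝ} (h : u ∈ Set.Icc (0:ℝ) U) : bump U n u = u ^ n :=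
  Set.indicator_of_mem h _

lemma bump_conv_integral (U V : ℝ) (n : ℕ) (hU : 0 ≤ U) (hV : 0 ≤ V) :
    ∫ z, ∫ y, bump U n y * bump V n (z - y)
      = (U ^ (n+1) / (n+1)) * (V ^ (n+1) / (n+1)) := by
  have h : (fun z => ∫ y, bump U n y * bump V n (z - y))
      = (bump U n) ⋆[ContinuousLinearMap.mul ℝ ℝ] (bump V n) := by
    funext z
    rw [convolution_def]
    simp
  rw [h, integral_convolution _ (bump_integrable U n) (bump_integrable V n),
    bump_integral U n hU, bump_integral V n hV]
  simp

theorem Lker_eq (κ lam : ℝ) (hκ : 0 < κ) (n : ℕ) (t x : ℝ) :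
    (-(κ * t) ≤ x ∧ x ≤ κ * t →
      Lker κ lam n t x
        = lam ^ (2 * n + 2) * ((κ * t) ^ 2 - x ^ 2) ^ n
            / (2 ^ (3 * n + 2) * (n.factorial : ℝ) ^ 2 * κ ^ n)) ∧
    (κ * t < |x| → Lker κ lam n t x = 0) := by
  induction n generalizing t x with
  | zero =>
    constructor
    · rintro ⟨h1, h2⟩
      have ht : 0 ≤ t := by nlinarith
      have habs : |x| ≤ κ * t := abs_le.mpr ⟨h1, h2⟩
      simp [Lker, waveKernel, ht, habs, Nat.factorial]
      ring
    · intro h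
      have hcond : ¬ (0 ≤ t ∧ |x| ≤ κ * t) := by
        rintro ⟨-, h2⟩; linarith
      simp [Lker, waveKernel, hcond]
  | succ n ih =>
    have hL : Lker κ lam (n+1) t x
        = ∫ s in (0:ℝ)..t, ∫ y : ℝ, Lker κ lam 0 (t - s) (x - y) * Lker κ lam n s y := by
      conv_lhs => rw [Lker]
    constructor
    · rintro ⟨hx1, hx2⟩
      have ht : 0 ≤ t := by nlinarith
      set U := κ * t + x with hUdef
      set V := κ * t - x with hVdef
      have hU : 0 ≤ U := by rw [hUdef]; linarith
      have hV : 0 ≤ V := by rw [hVdef]; linarith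
      set c : ℝ := lam ^ (2*n+2) / (2 ^ (3*n+2) * (n.factorial : ℝ)^2 * κ ^ n) with hc
      -- Step A : pointwise identification of the integrand
      have hA : ∀ s ∈ Set.uIcc (0:ℝ) t, ∀ y : ℝ,
          Lker κ lam 0 (t - s) (x - y) * Lker κ lam n s y
            = (lam ^ 2 / 4 * c) * (bump U n (κ*s + y) * bump V n (κ*s - y)) := by
        intro s hs y
        rw [Set.uIcc_of_le ht] at hs
        obtain ⟨hs0, hst⟩ := hs
        by_cases hy : -(κ * s) ≤ y ∧ y ≤ κ * s
        · have hLn := (ih s y).1 hy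
          by_cases hcnd : |x - y| ≤ κ * (t - s)
          · have h0 : Lker κ lam 0 (t - s) (x - y) = lam ^ 2 * (1/2)^2 := by
              simp [Lker, waveKernel, sub_nonneg.mpr hst, hcnd]
            have habs := abs_le.mp hcnd
            have hb1 : bump U n (κ*s + y) = (κ*s + y)^n :=
              bump_eq_pow ⟨by linarith [hy.1], by rw [hUdef]; linarith [habs.1]⟩
            have hb2 : bump V n (κ*s - y) = (κ*s - y)^n :=
              bump_eq_pow ⟨by linarith [hy.2], by rw [hVdef]; linarith [habs.2]⟩
            have hfac : (κ*s)^2 - y^2 = (κ*s + y) * (κ*s - y) := by ring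
            rw [h0, hLn, hb1, hb2, hfac, mul_pow]
            ring
          · have h0 : Lker κ lam 0 (t - s) (x - y) = 0 := by
              simp [Lker, waveKernel, hcnd]
            rw [h0, zero_mul]
            rcases lt_abs.mp (not_le.mp hcnd) with h | h
            · have hb : bump V n (κ*s - y) = 0 := by
                apply bump_eq_zero
                intro hm
                have := hm.2
                rw [hVdef] at this
                linarith
              rw [hb, mul_zero, mul_zero]
            · have hb : bump U n (κ*s + y) = 0 := by
                apply bump_eq_zero
                intro hm
                have := hm.2
                rw [hUdef] at this
                linarith
              rw [hb, zero_mul, mul_zero]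
        · have hLn : Lker κ lam n s y = 0 := by
            apply (ih s y).2
            rcases not_and_or.mp hy with h | h
            · have : y < -(κ*s) := not_le.mp h
              calc κ * s < -y := by linarith
                _ ≤ |y| := neg_le_abs y
            · have : κ*s < y := not_le.mp h
              exact lt_of_lt_of_le this (le_abs_self y)
          rw [hLn, mul_zero]
          rcases not_and_or.mp hy with h | h
          · have hyl : y < -(κ*s) := not_le.mp h
            have hb : bump U n (κ*s + y) = 0 := by
              apply bump_eq_zero
              intro hm
              have := hm.1
              linarith
            rw [hb, zero_mul, mul_zero]
          · have hyl : κ*s < y := not_le.mp h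
            have hb : bump V n (κ*s - y) = 0 := by
              apply bump_eq_zero
              intro hm
              have := hm.1
              linarith
            rw [hb, mul_zero, mul_zero]
      -- inner integrals
      have hinner : ∀ s ∈ Set.uIcc (0:ℝ) t,
          (∫ y : ℝ, Lker κ lam 0 (t - s) (x - y) * Lker κ lam n s y)
            = (lam ^ 2 / 4 * c) * ∫ y : ℝ, bump U n (κ*s + y) * bump V n (κ*s - y) := by
        intro s hs
        rw [← MeasureTheory.integral_const_mul]
        congr 1
        funext y
        exact hA s hs y
      have h2κ : (2*κ) ≠ 0 := by positivity
      -- Step B : translate y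
      have hB : ∀ s : ℝ, (∫ y : ℝ, bump U n (κ*s + y) * bump V n (κ*s - y))
          = ∫ y : ℝ, bump U n y * bump V n (2*κ*s - y) := by
        intro s
        have hself := integral_add_left_eq_self (μ := volume)
          (fun y => bump U n y * bump V n (2*κ*s - y)) (κ*s)
        rw [← hself]
        congr 1
        funext y
        have harg : 2*κ*s - (κ*s + y) = κ*s - y := by ring
        rw [harg]
      -- Step C : scale s
      have hC : (∫ s in (0:ℝ)..t, ∫ y : ℝ, bump U n y * bump V n (2*κ*s - y))
          = (2*κ)⁻¹ * ∫ z in (0:ℝ)..(2*κ*t), ∫ y : ℝ, bump U n y * bump V n (z - y) := by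
        have := intervalIntegral.integral_comp_mul_left (a := (0:ℝ)) (b := t)
          (f := fun z => ∫ y : ℝ, bump U n y * bump V n (z - y)) h2κ
        simpa [mul_assoc] using this
      -- Step D : extend to ℝ
      have hD : (∫ z in (0:ℝ)..(2*κ*t), ∫ y : ℝ, bump U n y * bump V n (z - y))
          = ∫ z : ℝ, ∫ y : ℝ, bump U n y * bump V n (z - y) := by
        have hM : (0:ℝ) ≤ 2*κ*t := by positivity
        rw [intervalIntegral.integral_of_le hM, ← integral_Icc_eq_integral_Ioc]
        apply setIntegral_eq_integral_of_forall_compl_eq_zero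
        intro z hz
        have hzz : 0 ≤ z → 2*κ*t < z := by
          simpa [Set.mem_Icc, not_and_or, not_le] using hz
        have hzero : ∀ y : ℝ, bump U n y * bump V n (z - y) = 0 := by
          intro y
          by_cases hy1 : y ∈ Set.Icc (0:ℝ) U
          · by_cases hy2 : z - y ∈ Set.Icc (0:ℝ) V
            · exfalso
              obtain ⟨a1, a2⟩ := hy1
              obtain ⟨b1, b2⟩ := hy2
              rw [hUdef] at a2
              rw [hVdef] at b2
              have hz0 : (0:ℝ) ≤ z := by linarith
              have := hzz hz0
              linarith
            · rw [bump_eq_zero hy2, mul_zero]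
          · rw [bump_eq_zero hy1, zero_mul]
        simp only [hzero, integral_zero]
      -- put it together
      rw [hL, intervalIntegral.integral_congr hinner,
        intervalIntegral.integral_const_mul]
      simp only [hB]
      rw [hC, hD, bump_conv_integral U V n hU hV]
      have hUV : (κ*t)^2 - x^2 = U * V := by rw [hUdef, hVdef]; ring
      rw [hUV, mul_pow, hc, Nat.factorial_succ]
      have hf : (n.factorial : ℝ) ≠ 0 := Nat.cast_ne_zero.mpr n.factorial_ne_zero
      have hn1 : ((n:ℝ) + 1) ≠ 0 := by positivity
      have hκ' : κ ≠ 0 := hκ.ne'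
      push_cast
      field_simp
      ring
    · intro hx
      have hzero : ∀ s y : ℝ, Lker κ lam 0 (t - s) (x - y) * Lker κ lam n s y = 0 := by
        intro s y
        rcases lt_or_ge (κ * s) |y| with h | h
        · rw [(ih s y).2 h, mul_zero]
        · by_cases hcnd : 0 ≤ t - s ∧ |x - y| ≤ κ * (t - s)
          · exfalso
            have h1 := hcnd.2
            have h2 : |x| ≤ |x - y| + |y| := by
              calc |x| = |(x - y) + y| := by ring_nf
                _ ≤ |x - y| + |y| := abs_add_le _ _
            have : |x| ≤ κ * t := by
              calc |x| ≤ |x - y| + |y| := h2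
                _ ≤ κ * (t - s) + κ * s := add_le_add h1 h
                _ = κ * t := by ring
            linarith
          · have h0 : Lker κ lam 0 (t - s) (x - y) = 0 := by
              simp only [Lker, waveKernel, if_neg hcnd]
              ring
            rw [h0, zero_mul]
      rw [hL]
      simp only [hzero, integral_zero, intervalIntegral.integral_zero]
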